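/- Let (λ_j^{(n)})_{j=1}^p be sequences of nonnegative reals (eigenvalue estimates, ordered decreasingly λ_1^{(n)} ≥ ... ≥ λ_p^{(n)}) and let λ_1 ≥ ... ≥ λ_q > 0 = λ_{q+1} = ... = λ_p be the limits, with |λ_j^{(n)} - λ_j| = O(n^{-1/2}) for j ≤ q and λ_j^{(n)} = O(n^{-1}) for j > q, where 1 ≤ q ≤ p-1. Set c_n = log n / n and r_j^{(n)} = ((λ_{j+1}^{(n)})^2 + c_n)/((λ_j^{(n)})^2 + c_n) for 1 ≤ j ≤ p-1. Then for all sufficiently large n, the index minimizing j ↦ r_j^{(n)} over 1 ≤ j ≤ p-1 equals q. -/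

import Mathlib

/-!
For `j < q` the ratio `r_j` tends to `λ_{j+1}² / λ_j² > 0`. For `j > q` both squared eigenvalues
are `O(1/n²)`, hence `o(c_n)` with `c_n = log n / n`, so `r_j → 1`. Meanwhile the numerator of
`r_q` tends to `0` and its denominator to `λ_q² > 0`, so `r_q → 0` lies eventually below every
other `r_j`.
-/

open Finset Filter Topology

lemma tendsto_log_natCast_div_natCast_atTop :
    Tendsto (fun n : ℕ => Real.log n / n) atTop (𝓝 0) :=
  Real.isLittleO_log_id_atTop.tendsto_div_nhds_zero.comp tendsto_natCast_atTop_atTop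

lemma tendsto_of_abs_sub_le_div_sqrt {x : ℕ → ℝ} {a C : ℝ}
    (h : ∀ n ≥ 1, |x n - a| ≤ C / √n) : Tendsto x atTop (𝓝 a) := by
  have hsqrt : Tendsto (fun n : ℕ => C / √n) atTop (𝓝 0) :=
    tendsto_const_nhds.div_atTop
      (Real.tendsto_sqrt_atTop.comp tendsto_natCast_atTop_atTop)
  refine tendsto_iff_norm_sub_tendsto_zero.2 (squeeze_zero' (by simp) ?_ hsqrt)
  filter_upwards [eventually_ge_atTop 1] with n hn using h n hn

lemma tendsto_zero_of_nonneg_of_le_div {x : ℕ → ℝ} {C : ℝ} (h0 : ∀ n, 0 ≤ x n)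
    (h : ∀ n ≥ 1, x n ≤ C / n) : Tendsto x atTop (𝓝 0) :=
  squeeze_zero' (.of_forall h0) (eventually_atTop.2 ⟨1, h⟩)
    (tendsto_const_div_atTop_nhds_zero_nat C)

lemma tendsto_sq_div_log_div_of_nonneg_of_le_div {x : ℕ → ℝ} {C : ℝ} (h0 : ∀ n, 0 ≤ x n)
    (h : ∀ n ≥ 1, x n ≤ C / n) :
    Tendsto (fun n : ℕ => x n ^ 2 / (Real.log n / n)) atTop (𝓝 0) := by
  have hnlog : Tendsto (fun n : ℕ => C ^ 2 / (n * Real.log n)) atTop (𝓝 0) :=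
    tendsto_const_nhds.div_atTop <| tendsto_natCast_atTop_atTop.atTop_mul_atTop₀
      (Real.tendsto_log_atTop.comp tendsto_natCast_atTop_atTop)
  refine squeeze_zero' ?_ ?_ hnlog
  · filter_upwards with n
    have := h0 n
    positivity
  · filter_upwards [eventually_ge_atTop 2] with n hn
    have hn' : (1 : ℝ) < n := by exact_mod_cast hn
    have hlog : 0 < Real.log n := Real.log_pos hn'
    calc x n ^ 2 / (Real.log n / n) ≤ (C / n) ^ 2 / (Real.log n / n) := by
          gcongr
          exacts [h0 n, h n (by omega)]
      _ = C ^ 2 / (n * Real.log n) := by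
          field_simp

section SqAddDivSqAdd

variable {ι : Type*} {l : Filter ι} {a b c : ι → ℝ}

lemma tendsto_sq_add_div_sq_add {α β : ℝ} (ha : Tendsto a l (𝓝 α)) (hb : Tendsto b l (𝓝 β))
    (hc : Tendsto c l (𝓝 0)) (hβ : β ≠ 0) :
    Tendsto (fun i => (a i ^ 2 + c i) / (b i ^ 2 + c i)) l (𝓝 (α ^ 2 / β ^ 2)) := by
  have h := ((ha.pow 2).add hc).div ((hb.pow 2).add hc) (by simpa using hβ)
  rwa [add_zero, add_zero] at h

lemma tendsto_sq_add_div_sq_add_one (ha : Tendsto (fun i => a i ^ 2 / c i) l (𝓝 0))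
    (hb : Tendsto (fun i => b i ^ 2 / c i) l (𝓝 0)) (hc : ∀ᶠ i in l, c i ≠ 0) :
    Tendsto (fun i => (a i ^ 2 + c i) / (b i ^ 2 + c i)) l (𝓝 1) := by
  have := (ha.add_const 1).div (hb.add_const 1) (by norm_num)
  rw [zero_add, div_one] at this
  refine this.congr' ?_
  filter_upwards [hc] with i hi
  rw [Pi.div_apply, div_add_one hi, div_add_one hi, div_div_div_cancel_right₀ hi]

end SqAddDivSqAdd

lemma tendsto_sq_add_div_sq_add_one_of_le_div {a b : ℕ → ℝ} {C D : ℝ} (ha₀ : ∀ n, 0 ≤ a n)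
    (ha : ∀ n ≥ 1, a n ≤ C / n) (hb₀ : ∀ n, 0 ≤ b n) (hb : ∀ n ≥ 1, b n ≤ D / n) :
    Tendsto (fun n : ℕ => (a n ^ 2 + Real.log n / n) / (b n ^ 2 + Real.log n / n))
      atTop (𝓝 1) := by
  refine tendsto_sq_add_div_sq_add_one (tendsto_sq_div_log_div_of_nonneg_of_le_div ha₀ ha)
    (tendsto_sq_div_log_div_of_nonneg_of_le_div hb₀ hb) ?_
  filter_upwards [eventually_ge_atTop 2] with n hn
  have hn' : (1 : ℝ) < n := by exact_mod_cast hn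
  exact (div_pos (Real.log_pos hn') (by linarith)).ne'

lemma pos_of_antitoneOn_Icc {L : ℕ → ℝ} {p q : ℕ}
    (hL : ∀ j ∈ Finset.Icc 1 (p - 1), L (j + 1) ≤ L j) (hqp : q ≤ p) (hq : 0 < L q)
    {j : ℕ} (hj1 : 1 ≤ j) (hjq : j ≤ q) : 0 < L j := by
  have hanti : AntitoneOn L (Set.Icc 1 p) :=
    antitoneOn_of_add_one_le Set.ordConnected_Icc fun a _ ha ha' =>
      hL a (Finset.mem_Icc.2 ⟨ha.1, by have := ha'.2; omega⟩)
  exact hq.trans_le (hanti ⟨hj1, by omega⟩ ⟨by omega, hqp⟩ hjq)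

lemma exists_forall_ge_lt_of_tendsto_zero {r : ℕ → ℕ → ℝ} {s : Finset ℕ} {q : ℕ}
    (hq : Tendsto (r · q) atTop (𝓝 0))
    (hs : ∀ j ∈ s, j ≠ q → ∃ ℓ > 0, Tendsto (r · j) atTop (𝓝 ℓ)) :
    ∃ N, ∀ n ≥ N, ∀ j ∈ s, j ≠ q → r n q < r n j := by
  refine eventually_atTop.1 ((eventually_all_finset s).2 fun j hj => ?_)
  by_cases hjq : j = q
  · exact .of_forall fun _ h => absurd hjq h
  · obtain ⟨ℓ, hℓ, hrℓ⟩ := hs j hj hjq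
    exact (hq.eventually_lt hrℓ hℓ).mono fun _ h _ => h

theorem stmt_5_general {p q : ℕ} (hq1 : 1 ≤ q) (hqp : q ≤ p - 1)
    (lam : ℕ → ℕ → ℝ) (L : ℕ → ℝ)
    (hnonneg : ∀ n, ∀ j ∈ Finset.Icc 1 p, 0 ≤ lam n j)
    (hLdecr : ∀ j ∈ Finset.Icc 1 (p - 1), L (j + 1) ≤ L j)
    (hLpos : 0 < L q)
    (hOhalf : ∃ Cst > 0, ∀ n ≥ 1, ∀ j, 1 ≤ j → j ≤ q →
      |lam n j - L j| ≤ Cst / Real.sqrt n)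
    (hOone : ∃ Cst > 0, ∀ n ≥ 1, ∀ j, q < j → j ≤ p → lam n j ≤ Cst / n)
    (c : ℕ → ℝ) (hc : ∀ n, c n = Real.log n / n)
    (r : ℕ → ℕ → ℝ)
    (hr : ∀ n, ∀ j ∈ Finset.Icc 1 (p - 1),
      r n j = ((lam n (j + 1)) ^ 2 + c n) / ((lam n j) ^ 2 + c n)) :
    ∃ N : ℕ, ∀ n ≥ N, ∀ j ∈ Finset.Icc 1 (p - 1), j ≠ q → r n q < r n j := by
  obtain rfl : c = fun n : ℕ => Real.log n / n := funext hc
  obtain ⟨C₁, -, hC₁⟩ := hOhalf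
  obtain ⟨C₂, -, hC₂⟩ := hOone
  have hsignal (j) (hj1 : 1 ≤ j) (hjq : j ≤ q) : Tendsto (lam · j) atTop (𝓝 (L j)) :=
    tendsto_of_abs_sub_le_div_sqrt fun n hn => hC₁ n hn j hj1 hjq
  have hnoise (j) (hqj : q < j) (hjp : j ≤ p) :
      (∀ n, 0 ≤ lam n j) ∧ ∀ n ≥ 1, lam n j ≤ C₂ / n :=
    ⟨fun n => hnonneg n j (mem_Icc.2 ⟨by omega, hjp⟩), fun n hn => hC₂ n hn j hqj hjp⟩
  have hL (j) (hj1 : 1 ≤ j) (hjq : j ≤ q) : 0 < L j :=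
    pos_of_antitoneOn_Icc hLdecr (by omega) hLpos hj1 hjq
  have hr' (j) (hj : j ∈ Icc 1 (p - 1)) :
      (r · j) = fun n => (lam n (j + 1) ^ 2 + Real.log n / n) / (lam n j ^ 2 + Real.log n / n) :=
    funext fun n => hr n j hj
  refine exists_forall_ge_lt_of_tendsto_zero (s := Icc 1 (p - 1)) ?_ ?_
  · obtain ⟨h₀, h⟩ := hnoise (q + 1) (by omega) (by omega)
    rw [hr' q (mem_Icc.2 ⟨hq1, hqp⟩)]
    simpa using tendsto_sq_add_div_sq_add (tendsto_zero_of_nonneg_of_le_div h₀ h)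
      (hsignal q hq1 le_rfl) tendsto_log_natCast_div_natCast_atTop hLpos.ne'
  · intro j hj hjq
    rw [hr' j hj]
    obtain ⟨hj1, hjp⟩ := mem_Icc.1 hj
    rcases hjq.lt_or_gt with hjq | hqj
    · have := hL j hj1 hjq.le
      have := hL (j + 1) (by omega) hjq
      exact ⟨_, by positivity, tendsto_sq_add_div_sq_add (hsignal (j + 1) (by omega) hjq)
        (hsignal j hj1 hjq.le) tendsto_log_natCast_div_natCast_atTop (hL j hj1 hjq.le).ne'⟩
    · obtain ⟨ha₀, ha⟩ := hnoise (j + 1) (by omega) (by omega)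
      obtain ⟨hb₀, hb⟩ := hnoise j hqj (by omega)
      exact ⟨1, one_pos, tendsto_sq_add_div_sq_add_one_of_le_div ha₀ ha hb₀ hb⟩

/-- RERE consistency (deterministic core): with ridge `c_n = log n / n`, the ridge-type
eigenvalue ratio `r_j^{(n)}` is uniquely minimized at `j = q` for all large `n`. -/
theorem stmt_5 {p q : ℕ} (hq1 : 1 ≤ q) (hqp : q ≤ p - 1)
    (lam : ℕ → ℕ → ℝ) (L : ℕ → ℝ)
    (hnonneg : ∀ n, ∀ j ∈ Finset.Icc 1 p, 0 ≤ lam n j)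
    (hdecr : ∀ n, ∀ j ∈ Finset.Icc 1 (p - 1), lam n (j + 1) ≤ lam n j)
    (hLdecr : ∀ j ∈ Finset.Icc 1 (p - 1), L (j + 1) ≤ L j)
    (hLpos : 0 < L q)
    (hLzero : ∀ j, q < j → j ≤ p → L j = 0)
    (hOhalf : ∃ Cst > 0, ∀ n ≥ 1, ∀ j, 1 ≤ j → j ≤ q →
      |lam n j - L j| ≤ Cst / Real.sqrt n)
    (hOone : ∃ Cst > 0, ∀ n ≥ 1, ∀ j, q < j → j ≤ p → lam n j ≤ Cst / n)
    (c : ℕ → ℝ) (hc : ∀ n, c n = Real.log n / n)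
    (r : ℕ → ℕ → ℝ)
    (hr : ∀ n, ∀ j ∈ Finset.Icc 1 (p - 1),
      r n j = ((lam n (j + 1)) ^ 2 + c n) / ((lam n j) ^ 2 + c n)) :
    ∃ N : ℕ, ∀ n ≥ N, ∀ j ∈ Finset.Icc 1 (p - 1), j ≠ q → r n q < r n j :=
  stmt_5_general hq1 hqp lam L hnonneg hLdecr hLpos hOhalf hOone c hc r hr
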